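/- arXiv:1905.09609 — 3 statements merged into one kernel-verified Lean document; each statement's English description precedes it below -/
import Mathlib

section
/- For every pair of total computable functions u₃ : ℕ → ℕ and h : ℕ → ℕ there exist total computable functions f : ℕ × ℕ → ℕ and g : ℕ → ℕ such that: (i) for all a, m: φ_{g(a)}(m) is defined and φ_{g(a)}(m) = u₃(f(a, (m)₁)); and (ii) for all a, t, s such that φ_{(a)₁}(⟨t,s⟩) is defined, writing x = φ_{(a)₁}(⟨t,s⟩): φ_{f(a,t)}(s) is defined, and φ_{f(a,t)}(s) = u₃(h((x)₁)) if (x)₀ = 0, while φ_{f(a,t)}(s) = ⟨1, g(x)⟩ if (x)₀ ≠ 0. -/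
noncomputable section

/-- The `e`-th partial recursive function `ℕ ⇀ ℕ`. -/
def phi (e : ℕ) : ℕ →. ℕ := (Denumerable.ofNat Nat.Partrec.Code e).eval

/-- The monotone operator `Ψ₀`. -/
def Psi0 : Set ℕ →o Set ℕ where
  toFun J := {a | (∃ e, a = Nat.pair 0 e) ∨
    ∃ e, a = Nat.pair 1 e ∧ ∀ k, ∃ v ∈ phi e k, v ∈ J}
  monotone' := by
    intro J J' hJ a ha
    rcases ha with ⟨e, he⟩ | ⟨e, he, hk⟩
    · exact Or.inl ⟨e, he⟩
    · refine Or.inr ⟨e, he, fun k => ?_⟩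
      obtain ⟨v, hv, hvJ⟩ := hk k
      exact ⟨v, hv, hJ hvJ⟩

/-- `I`, the least fixed point of `Ψ₀`. -/
def Iset : Set ℕ := OrderHom.lfp Psi0

/-- The transfinite stages `I_ξ`. -/
def Istage : Ordinal → Set ℕ :=
  WellFounded.fix Ordinal.lt_wf fun ξ ih =>
    if ξ = 0 then {a | ∃ e, a = Nat.pair 0 e}
    else {a | ∃ e, a = Nat.pair 1 e ∧
      ∀ k, ∃ v ∈ phi e k, ∃ η, ∃ hη : η < ξ, v ∈ ih η hη}

/-- The norm `‖a‖` of `a ∈ I`: the least ordinal `ξ` with `a ∈ I_ξ`. -/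
def Inorm (a : ℕ) : Ordinal := sInf {ξ | a ∈ Istage ξ}

/-- The monotone operator `Ψ₁`. -/
def Psi1 : Set (ℕ × ℕ) →o Set (ℕ × ℕ) where
  toFun A := {p | (∃ e, p.1 = Nat.pair 0 e ∧ p.2 = e) ∨
    ∃ e, p.1 = Nat.pair 1 e ∧ ∃ t, ∀ s, ∃ v ∈ phi e (Nat.pair t s), (v, p.2) ∈ A}
  monotone' := by
    intro A A' hA p hp
    rcases hp with ⟨e, he, hx⟩ | ⟨e, he, t, ht⟩
    · exact Or.inl ⟨e, he, hx⟩
    · refine Or.inr ⟨e, he, t, fun s => ?_⟩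
      obtain ⟨v, hv, hvA⟩ := ht s
      exact ⟨v, hv, hA hvA⟩

/-- `Hp`, the least fixed point of `Ψ₁`. -/
def Hp : Set (ℕ × ℕ) := OrderHom.lfp Psi1

/-- `H_a`, the `a`-section of `Hp`. -/
def Hset (a : ℕ) : Set ℕ := {x | (a, x) ∈ Hp}

/-- The monotone operator `Φ_ψ` associated with the positive formula `ψ`. -/
def PhiPsi : Set ℕ →o Set ℕ where
  toFun R := {y | ∃ a x e, y = Nat.pair a x ∧
    ((a = Nat.pair 0 e ∧ x = e) ∨
     (a = Nat.pair 1 e ∧ ∃ t, ∀ s, ∃ v ∈ phi e (Nat.pair t s), Nat.pair v x ∈ R))}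
  monotone' := by
    intro R R' hR y hy
    obtain ⟨a, x, e, hy, hcase⟩ := hy
    refine ⟨a, x, e, hy, ?_⟩
    rcases hcase with h | ⟨he, t, ht⟩
    · exact Or.inl h
    · refine Or.inr ⟨he, t, fun s => ?_⟩
      obtain ⟨v, hv, hvR⟩ := ht s
      exact ⟨v, hv, hR hvR⟩

/-! A double use of the recursion theorem. A code `c` determines `f_c(a, t)`, the index of
`s ↦ c(⟨⟨a, t⟩, s⟩)`, and by s-m-n there are, uniformly in `c`, indices `g_c(a)` of
`m ↦ u₃(f_c(a, (m)₁))`. The recursion theorem with parameters then yields a code `c` such that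
`φ_{f_c(a,t)}(s)` is obtained from `x = φ_{(a)₁}(⟨t, s⟩)` by the required case distinction, which
refers to `g_c` itself; take `f = f_c` and `g = g_c`. -/

open Nat.Partrec (Code)
open Nat.Partrec.Code Encodable

theorem partrec₂_phi : Partrec₂ phi :=
  eval_part.comp (Computable.ofNat Code |>.comp .fst) .snd

def curryIndex {α : Type*} [Encodable α] (c : Code) (x : α) : ℕ :=
  encode (curry c (encode x))

theorem phi_curryIndex {α : Type*} [Encodable α] (c : Code) (x : α) (m : ℕ) :
    phi (curryIndex c x) m = c.eval (Nat.pair (encode x) m) := by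
  rw [phi, curryIndex, Denumerable.ofNat_encode, eval_curry]

theorem primrec₂_curryIndex {α : Type*} [Primcodable α] : Primrec₂ (curryIndex (α := α)) :=
  Primrec.encode.comp <| primrec₂_curry.comp .fst (Primrec.encode.comp .snd)

/-- Kleene's recursion theorem with parameters. -/
theorem exists_code_phi_curryIndex_eq_self {α : Type*} [Primcodable α] {F : Code → α → ℕ →. ℕ}
    (hF : Partrec₂ fun (c : Code) (p : α × ℕ) => F c p.1 p.2) :
    ∃ c : Code, ∀ x m, phi (curryIndex c x) m = F c x m := by
  have hG : Partrec₂ fun (c : Code) (n : ℕ) =>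
      (decode (α := α) n.unpair.1 : Part α).bind fun x => F c x n.unpair.2 :=
    (Computable.decode.comp (Computable.fst.comp (Computable.unpair.comp .snd))).ofOption.bind
      (hF.comp (Computable.fst.comp .fst) <|
        Computable.snd.pair <| Computable.snd.comp <| Computable.unpair.comp <|
          Computable.snd.comp .fst)
  obtain ⟨c, hc⟩ := fixed_point₂ hG
  exact ⟨c, fun x m => by simp [phi_curryIndex, hc]⟩

theorem exists_code_phi_curryIndex_eq {α : Type*} [Primcodable α] {F : α → ℕ →. ℕ}
    (hF : Partrec₂ F) : ∃ d : Code, ∀ x m, phi (curryIndex d x) m = F x m :=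
  exists_code_phi_curryIndex_eq_self (F := fun _ => F) <|
    hF.comp (Computable.fst.comp .snd) (Computable.snd.comp .snd)

theorem exists_code_phi_curryIndex_eq_comp_curryIndex {u : ℕ → ℕ} (hu : Computable u) :
    ∃ d : Code, ∀ (c : Code) (a m : ℕ),
      phi (curryIndex d (c, a)) m = Part.some (u (curryIndex c (a, m.unpair.2))) :=
  (exists_code_phi_curryIndex_eq (F := fun (p : Code × ℕ) m =>
      Part.some (u (curryIndex p.1 (p.2, m.unpair.2)))) <|
    (hu.comp <| primrec₂_curryIndex.to_comp.comp (Computable.fst.comp .fst) <|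
      Computable.snd.comp .fst |>.pair <| Computable.snd.comp <|
        Computable.unpair.comp .snd).partrec).imp
    fun _ hd c a m => hd (c, a) m

/-- `φ_{f_c(a,t)}(s)` as a function of `x = φ_{(a)₁}(⟨t, s⟩)`, where `g_c(x) = curryIndex d (c, x)`
is given by the code `d`. -/
def fValue (u₃ h : ℕ → ℕ) (d c : Code) (x : ℕ) : ℕ :=
  if x.unpair.1 = 0 then u₃ (h x.unpair.2) else Nat.pair 1 (curryIndex d (c, x))

theorem computable₂_fValue {u₃ h : ℕ → ℕ} (hu₃ : Computable u₃) (hh : Computable h) (d : Code) :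
    Computable₂ (fValue u₃ h d) :=
  (Computable.cond
    (Primrec.eq.comp (Primrec.fst.comp (Primrec.unpair.comp .snd)) (.const 0)).decide.to_comp
    (hu₃.comp <| hh.comp <| Computable.snd.comp <| Computable.unpair.comp .snd)
    (Primrec₂.natPair.comp (.const 1) <|
      primrec₂_curryIndex.comp (.const d) (.pair .fst .snd)).to_comp).of_eq
    fun _ => Bool.cond_decide _ _ _

theorem exists_code_phi_curryIndex_eq_map_fValue {u₃ h : ℕ → ℕ} (hu₃ : Computable u₃)
    (hh : Computable h) (d : Code) :
    ∃ c : Code, ∀ a t s : ℕ,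
      phi (curryIndex c (a, t)) s = (phi a.unpair.2 (Nat.pair t s)).map (fValue u₃ h d c) := by
  have hF : Partrec₂ fun (c : Code) (p : (ℕ × ℕ) × ℕ) =>
      (phi p.1.1.unpair.2 (Nat.pair p.1.2 p.2)).map (fValue u₃ h d c) :=
    Partrec.map (partrec₂_phi.comp
        (Computable.snd.comp <| Computable.unpair.comp <| Computable.fst.comp <|
          Computable.fst.comp .snd)
        (Primrec₂.natPair.comp (Primrec.snd.comp <| Primrec.fst.comp .snd)
          (Primrec.snd.comp .snd)).to_comp)
      ((computable₂_fValue hu₃ hh d).comp (Computable.fst.comp .fst) .snd)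
  obtain ⟨c, hc⟩ := exists_code_phi_curryIndex_eq_self (α := ℕ × ℕ)
    (F := fun c p s => (phi p.1.unpair.2 (Nat.pair p.2 s)).map (fValue u₃ h d c)) hF
  exact ⟨c, fun a t s => hc (a, t) s⟩

/-- Claim 3: for any total computable `u₃, h` there are total computable `f, g` with
`φ_{g(a)}(m) = u₃(f(a, (m)₁))` (always defined), and whenever `x = φ_{(a)₁}(⟨t,s⟩)` is
defined, `φ_{f(a,t)}(s)` is defined and equals `u₃(h((x)₁))` if `(x)₀ = 0`, and
`⟨1, g(x)⟩` otherwise. -/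
theorem exists_f_g (u₃ h : ℕ → ℕ) (hu₃ : Computable u₃) (hh : Computable h) :
    ∃ (f : ℕ × ℕ → ℕ) (g : ℕ → ℕ), Computable f ∧ Computable g ∧
      (∀ a m : ℕ, phi (g a) m = Part.some (u₃ (f (a, m.unpair.2)))) ∧
      (∀ a t s x : ℕ, x ∈ phi a.unpair.2 (Nat.pair t s) →
        (x.unpair.1 = 0 → phi (f (a, t)) s = Part.some (u₃ (h x.unpair.2))) ∧
        (x.unpair.1 ≠ 0 → phi (f (a, t)) s = Part.some (Nat.pair 1 (g x)))) := by
  obtain ⟨d, hd⟩ := exists_code_phi_curryIndex_eq_comp_curryIndex hu₃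
  obtain ⟨c, hc⟩ := exists_code_phi_curryIndex_eq_map_fValue hu₃ hh d
  refine ⟨curryIndex c, fun a => curryIndex d (c, a),
    (primrec₂_curryIndex.comp (.const c) .id).to_comp,
    (primrec₂_curryIndex.comp (.const d) (.pair (.const c) .id)).to_comp,
    hd c, fun a t s x hx => ?_⟩
  rw [hc, Part.eq_some_iff.mpr hx, Part.map_some]
  exact ⟨fun h0 => by rw [fValue, if_pos h0], fun h0 => by rw [fValue, if_neg h0]⟩
end
end

section
/- There exists a computable function u₃ : ℕ → ℕ such that for every e : ℕ, if for all i the value φ_e(i) is defined and φ_e(i) ∈ I, then u₃(e) ∈ I and H_{u₃(e)} = ⋃_{i ∈ ℕ} H_{φ_e(i)}; that is, the coded family {H_a | a ∈ I} is uniformly closed under effective countable unions. -/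
noncomputable section

theorem exists_computable_phi_index {F : ℕ → ℕ →. ℕ} (hF : Partrec₂ F) :
    ∃ f : ℕ → ℕ, Computable f ∧ ∀ e, phi (f e) = F e := by
  obtain ⟨c, hc⟩ : ∃ c : Nat.Partrec.Code, c.eval = fun n => F n.unpair.1 n.unpair.2 :=
    Nat.Partrec.Code.exists_code.1 (Partrec.nat_iff.1 (hF.comp
      (Computable.fst.comp Computable.unpair) (Computable.snd.comp Computable.unpair)))
  refine ⟨fun e => Encodable.encode (c.curry e),
    (Primrec.encode.comp (Nat.Partrec.Code.primrec₂_curry.comp (Primrec.const c)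
      Primrec.id)).to_comp, fun e => funext fun k => ?_⟩
  simp [phi, Nat.Partrec.Code.eval_curry, hc]

theorem pair_one_mem_Iset {e : ℕ} (he : ∀ k, ∃ v ∈ phi e k, v ∈ Iset) :
    Nat.pair 1 e ∈ Iset := by
  rw [Iset, ← OrderHom.map_lfp Psi0]
  exact Or.inr ⟨e, rfl, he⟩

theorem mem_Hset_pair_one {e x : ℕ} :
    x ∈ Hset (Nat.pair 1 e) ↔ ∃ t, ∀ s, ∃ v ∈ phi e (Nat.pair t s), x ∈ Hset v := by
  change (Nat.pair 1 e, x) ∈ Hp ↔ _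
  rw [Hp, ← OrderHom.map_lfp Psi1]
  constructor
  · rintro (⟨e', he', -⟩ | ⟨e', he', ht⟩)
    · exact absurd (Nat.pair_eq_pair.1 he').1 one_ne_zero
    · rwa [(Nat.pair_eq_pair.1 he').2]
  · exact fun ht => Or.inr ⟨e, rfl, ht⟩

/-- The coded family `{H_a | a ∈ I}` is uniformly closed under effective countable
unions: there is a computable `u₃` such that whenever `φ_e` is total with values in `I`,
`u₃(e) ∈ I` and `H_{u₃(e)} = ⋃ᵢ H_{φ_e(i)}`. -/
theorem exists_u3 :
    ∃ u₃ : ℕ → ℕ, Computable u₃ ∧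
      ∀ e : ℕ, (∀ i, ∃ v ∈ phi e i, v ∈ Iset) →
        u₃ e ∈ Iset ∧ Hset (u₃ e) = {x | ∃ i, ∃ v ∈ phi e i, x ∈ Hset v} := by
  -- `f e` indexes `φ_e` made independent of the second component: `φ_{f e}⟨t, s⟩ = φ_e(t)`.
  obtain ⟨f, hf, hphi⟩ := exists_computable_phi_index
    (F := fun e k => phi e k.unpair.1)
    (Nat.Partrec.Code.eval_part.comp ((Computable.ofNat _).comp Computable.fst)
      (Computable.fst.comp (Computable.unpair.comp Computable.snd)))
  refine ⟨fun e => Nat.pair 1 (f e),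
    (Primrec₂.natPair.comp (Primrec.const 1) Primrec.id).to_comp.comp hf, fun e he => ⟨?_, ?_⟩⟩
  · exact pair_one_mem_Iset fun k => by rw [hphi]; exact he _
  · ext x
    simp only [mem_Hset_pair_one, hphi, Nat.unpair_pair, forall_const, Set.mem_ofPred_eq]
end
end

section
/- If Q ⊆ ℕ is a fixed point of Φ_ψ (i.e. Φ_ψ(Q) = Q), then for every a ∈ I and every x : ℕ: x ∈ H_a if and only if ⟨a,x⟩ ∈ Q. -/
noncomputable section

/-!
Under the pairing `(a, x) ↦ ⟨a, x⟩`, the operator `Φ_ψ` is conjugate to `Ψ₁`. Hence the pullback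
of a fixed point `Q` of `Φ_ψ` is closed under `Ψ₁` and contains its least fixed point `Hp`.
Conversely, `⟨a, x⟩ ∈ Q` implies `(a, x) ∈ Hp` by induction along `I`: unfolding `Q = Φ_ψ(Q)` once
reduces `⟨a, x⟩` to the pairs `⟨v, x⟩` with `v = φ_e(⟨t, s⟩)`, and when `a = ⟨1, e⟩ ∈ I` these `v`
enter `I` at an earlier stage.
-/

open Function

theorem preimage_uncurry_pair_PhiPsi (R : Set ℕ) :
    uncurry Nat.pair ⁻¹' PhiPsi R = Psi1 (uncurry Nat.pair ⁻¹' R) := by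
  ext ⟨a, x⟩
  constructor
  · rintro ⟨a', x', e, heq, h⟩
    obtain ⟨rfl, rfl⟩ := Nat.pair_eq_pair.mp heq
    rcases h with h | ⟨ha, t, ht⟩
    · exact Or.inl ⟨e, h⟩
    · exact Or.inr ⟨e, ha, t, ht⟩
  · rintro (⟨e, h⟩ | ⟨e, ha, t, ht⟩)
    · exact ⟨a, x, e, rfl, Or.inl h⟩
    · exact ⟨a, x, e, rfl, Or.inr ⟨ha, t, ht⟩⟩

theorem Hp_subset_preimage_uncurry_pair {Q : Set ℕ} (hQ : PhiPsi Q ⊆ Q) :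
    Hp ⊆ uncurry Nat.pair ⁻¹' Q :=
  OrderHom.lfp_le Psi1 <| by
    rw [← preimage_uncurry_pair_PhiPsi]
    exact Set.preimage_mono hQ

theorem Psi1_Hp : Psi1 Hp = Hp :=
  OrderHom.map_lfp Psi1

/-- `Ψ₁` only queries `A` at the values `φ_e(⟨t, s⟩)`, which lie in `J` when `⟨1, e⟩ ∈ Ψ₀(J)`. -/
theorem mem_Psi1_of_mem_Psi0 {J : Set ℕ} {A B : Set (ℕ × ℕ)} {a x : ℕ} (ha : a ∈ Psi0 J)
    (hA : (a, x) ∈ Psi1 A) (hAB : ∀ v ∈ J, (v, x) ∈ A → (v, x) ∈ B) : (a, x) ∈ Psi1 B := by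
  rcases hA with h | ⟨e, hae, t, ht⟩
  · exact Or.inl h
  refine Or.inr ⟨e, hae, t, fun s => ?_⟩
  obtain ⟨v, hv, hvA⟩ := ht s
  rcases ha with ⟨e', hae'⟩ | ⟨e', hae', hJ⟩
  · exact absurd (Nat.pair_eq_pair.mp (hae'.symm.trans hae)).1 zero_ne_one
  obtain rfl : e' = e := (Nat.pair_eq_pair.mp (hae'.symm.trans hae)).2
  obtain ⟨w, hw, hwJ⟩ := hJ (Nat.pair t s)
  obtain rfl : w = v := Part.mem_unique hw hv
  exact ⟨w, hw, hAB w hwJ hvA⟩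

theorem mem_Hp_of_pair_mem {Q : Set ℕ} (hQ : Q ⊆ PhiPsi Q) {a : ℕ} (ha : a ∈ Iset) {x : ℕ}
    (hx : Nat.pair a x ∈ Q) : (a, x) ∈ Hp := by
  suffices Iset ⊆ {a | ∀ x, Nat.pair a x ∈ Q → (a, x) ∈ Hp} from this ha x hx
  refine OrderHom.lfp_le Psi0 fun a ha x hx => ?_
  have hx' : (a, x) ∈ Psi1 (uncurry Nat.pair ⁻¹' Q) := by
    rw [← preimage_uncurry_pair_PhiPsi]
    exact hQ hx
  rw [← Psi1_Hp]
  exact mem_Psi1_of_mem_Psi0 ha hx' fun v hv hvx => hv x hvx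

/-- If `Q` is a fixed point of `Φ_ψ`, then for all `a ∈ I` and all `x`,
`x ∈ H_a ↔ ⟨a, x⟩ ∈ Q`. -/
theorem fixed_point_reduction (Q : Set ℕ) (hQ : PhiPsi Q = Q) :
    ∀ a ∈ Iset, ∀ x : ℕ, x ∈ Hset a ↔ Nat.pair a x ∈ Q :=
  fun _ ha _ => ⟨fun hx => Hp_subset_preimage_uncurry_pair hQ.le hx,
    mem_Hp_of_pair_mem hQ.ge ha⟩
end
end
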